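/- arXiv:2302.09894 — 5 statements merged into one kernel-verified Lean document; each statement's English description precedes it below -/
import Mathlib

section
/- For every (w,r,q) ∈ ℂⁿ × (0,∞) × ℝ the map Ψ is Fréchet differentiable at (w,r,q), and its derivative DΨ_{(w,r,q)} satisfies, for all u ∈ ℂⁿ and ρ, σ ∈ ℝ: θ_{Ψ(w,r,q)}( DΨ_{(w,r,q)}(u,ρ,σ) ) = √(r⁴+q²)·θ_w(u) + q·θ̄_w(u), and θ̄_{Ψ(w,r,q)}( DΨ_{(w,r,q)}(u,ρ,σ) ) = √(r⁴+q²)·θ̄_w(u) + q·θ_w(u). (These are the pointwise forms of the pullback identities Ψ*θ = √(r⁴+q²)·Ξ + q·Ξ̄ and Ψ*θ̄ = √(r⁴+q²)·Ξ̄ + q·Ξ on 𝕊 × (0,∞) × ℝ.) -/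
open Finset

/-- `α⁺_w(v) = Σ_{i : k i > 0} (Re w_i · Im v_i − Im w_i · Re v_i)`. -/
noncomputable def angularPos (n : ℕ) (k : Fin n → ℤ) (w v : Fin n → ℂ) : ℝ :=
  ∑ i ∈ univ.filter (fun i => 0 < k i), ((w i).re * (v i).im - (w i).im * (v i).re)

/-- `α⁻_w(v) = Σ_{i : k i < 0} (Re w_i · Im v_i − Im w_i · Re v_i)`. -/
noncomputable def angularNeg (n : ℕ) (k : Fin n → ℤ) (w v : Fin n → ℂ) : ℝ :=
  ∑ i ∈ univ.filter (fun i => k i < 0), ((w i).re * (v i).im - (w i).im * (v i).re)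

/-- `θ := (α⁺ − α⁻)/2`. -/
noncomputable def thetaForm (n : ℕ) (k : Fin n → ℤ) (w v : Fin n → ℂ) : ℝ :=
  (angularPos n k w v - angularNeg n k w v) / 2

/-- `θ̄ := (α⁺ + α⁻)/2`. -/
noncomputable def thetaBarForm (n : ℕ) (k : Fin n → ℤ) (w v : Fin n → ℂ) : ℝ :=
  (angularPos n k w v + angularNeg n k w v) / 2

/-- `g⁺(r,q) := √(√(r⁴+q²) + q)`. -/
noncomputable def gPlus (r q : ℝ) : ℝ := Real.sqrt (Real.sqrt (r ^ 4 + q ^ 2) + q)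

/-- `g⁻(r,q) := √(√(r⁴+q²) − q)`. -/
noncomputable def gMinus (r q : ℝ) : ℝ := Real.sqrt (Real.sqrt (r ^ 4 + q ^ 2) - q)

/-- The bi-spherical coordinate map `Ψ(w,r,q)_i = g⁺(r,q)·w_i` for `k i > 0` and
`Ψ(w,r,q)_i = g⁻(r,q)·w_i` for `k i < 0`. -/
noncomputable def PsiMap (n : ℕ) (k : Fin n → ℤ) (p : (Fin n → ℂ) × ℝ × ℝ) : Fin n → ℂ :=
  fun i => if 0 < k i then (gPlus p.2.1 p.2.2 : ℂ) * p.1 i else (gMinus p.2.1 p.2.2 : ℂ) * p.1 i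

/-!
Along the `w`-directions `Ψ` scales the `P`-block by `g⁺` and the `N`-block by `g⁻`; along the
`(r, q)`-directions it only moves `Ψ(w)` radially inside each block. The radial part is invisible
to the angular forms `α^±_w(v) = Σ Im(w̄ᵢ vᵢ)`, so `Ψ^* α^± = (g^±)² α^±` with
`(g^±)² = √(r⁴+q²) ± q`, and the identities for `θ = (α⁺ − α⁻)/2` and `θ̄ = (α⁺ + α⁻)/2` follow.
-/

section DiagonalScaling

variable {ι F : Type*} [Fintype ι] [NormedAddCommGroup F] [NormedSpace ℝ F]
  {c : ι → F → ℝ} {w : ι → ℂ} {y : F}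

theorem differentiableAt_ofReal_mul_apply (hc : ∀ i, DifferentiableAt ℝ (c i) y) :
    DifferentiableAt ℝ (fun p : (ι → ℂ) × F => fun i => (c i p.2 : ℂ) * p.1 i) (w, y) :=
  differentiableAt_pi.2 fun i => by fun_prop

theorem fderiv_ofReal_mul_apply (hc : ∀ i, DifferentiableAt ℝ (c i) y) (u : ι → ℂ) (η : F)
    (i : ι) :
    fderiv ℝ (fun p : (ι → ℂ) × F => fun i => (c i p.2 : ℂ) * p.1 i) (w, y) (u, η) i
      = (c i y : ℂ) * u i + w i * (fderiv ℝ (c i) y η : ℂ) := by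
  have hw : HasFDerivAt (fun p : (ι → ℂ) × F => p.1 i)
      ((ContinuousLinearMap.proj i).comp (ContinuousLinearMap.fst ℝ (ι → ℂ) F)) (w, y) :=
    (hasFDerivAt_apply (𝕜 := ℝ) i (w, y).1).comp (w, y) hasFDerivAt_fst
  have hc' : HasFDerivAt (fun p : (ι → ℂ) × F => (c i p.2 : ℂ))
      (Complex.ofRealCLM.comp ((fderiv ℝ (c i) y).comp (ContinuousLinearMap.snd ℝ (ι → ℂ) F)))
      (w, y) :=
    Complex.ofRealCLM.hasFDerivAt.comp (w, y) ((hc i).hasFDerivAt.comp (w, y) hasFDerivAt_snd)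
  rw [fderiv_pi fun i => by fun_prop, ContinuousLinearMap.pi_apply, (hc'.fun_mul hw).fderiv]
  simp [mul_comm]

end DiagonalScaling

theorem re_mul_im_sub_im_mul_re_ofReal_mul (c t : ℝ) (w u : ℂ) :
    ((c : ℂ) * w).re * ((c : ℂ) * u + w * t).im - ((c : ℂ) * w).im * ((c : ℂ) * u + w * t).re
      = c ^ 2 * (w.re * u.im - w.im * u.re) := by
  simp only [Complex.add_re, Complex.add_im, Complex.mul_re, Complex.mul_im, Complex.ofReal_re,
    Complex.ofReal_im]
  ring

theorem abs_le_sqrt_pow_four_add_sq (r q : ℝ) : |q| ≤ √(r ^ 4 + q ^ 2) :=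
  Real.abs_le_sqrt (le_add_of_nonneg_left (by positivity))

theorem abs_lt_sqrt_pow_four_add_sq {r : ℝ} (hr : r ≠ 0) (q : ℝ) : |q| < √(r ^ 4 + q ^ 2) := by
  rw [← Real.sqrt_sq_eq_abs]
  exact Real.sqrt_lt_sqrt (sq_nonneg q) (lt_add_of_pos_left _ (by positivity))

theorem gPlus_sq (r q : ℝ) : gPlus r q ^ 2 = √(r ^ 4 + q ^ 2) + q :=
  Real.sq_sqrt (by linarith [neg_abs_le q, abs_le_sqrt_pow_four_add_sq r q])

theorem gMinus_sq (r q : ℝ) : gMinus r q ^ 2 = √(r ^ 4 + q ^ 2) - q :=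
  Real.sq_sqrt (by linarith [le_abs_self q, abs_le_sqrt_pow_four_add_sq r q])

theorem differentiableAt_sqrt_pow_four_add_sq {r : ℝ} (hr : r ≠ 0) (q : ℝ) :
    DifferentiableAt ℝ (fun p : ℝ × ℝ => √(p.1 ^ 4 + p.2 ^ 2)) (r, q) :=
  (by fun_prop : DifferentiableAt ℝ (fun p : ℝ × ℝ => p.1 ^ 4 + p.2 ^ 2) (r, q)).sqrt
    (by positivity)

theorem differentiableAt_gPlus {r : ℝ} (hr : r ≠ 0) (q : ℝ) :
    DifferentiableAt ℝ (fun p : ℝ × ℝ => gPlus p.1 p.2) (r, q) := by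
  have hpos : 0 < √(r ^ 4 + q ^ 2) + q := by
    linarith [(abs_lt.1 (abs_lt_sqrt_pow_four_add_sq hr q)).1]
  exact ((differentiableAt_sqrt_pow_four_add_sq hr q).fun_add differentiableAt_snd).sqrt hpos.ne'

theorem differentiableAt_gMinus {r : ℝ} (hr : r ≠ 0) (q : ℝ) :
    DifferentiableAt ℝ (fun p : ℝ × ℝ => gMinus p.1 p.2) (r, q) := by
  have hpos : 0 < √(r ^ 4 + q ^ 2) - q := by
    linarith [(abs_lt.1 (abs_lt_sqrt_pow_four_add_sq hr q)).2]
  exact ((differentiableAt_sqrt_pow_four_add_sq hr q).fun_sub differentiableAt_snd).sqrt hpos.ne'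

section PsiMap

variable {n : ℕ} (k : Fin n → ℤ) (w : Fin n → ℂ)

noncomputable def psiScale (i : Fin n) (p : ℝ × ℝ) : ℝ :=
  if 0 < k i then gPlus p.1 p.2 else gMinus p.1 p.2

theorem PsiMap_eq : PsiMap n k = fun p i => (psiScale k i p.2 : ℂ) * p.1 i := by
  ext p i
  unfold PsiMap psiScale
  split_ifs <;> rfl

theorem differentiableAt_psiScale (i : Fin n) {r : ℝ} (hr : r ≠ 0) (q : ℝ) :
    DifferentiableAt ℝ (psiScale k i) (r, q) := by
  unfold psiScale
  split_ifs
  · exact differentiableAt_gPlus hr q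
  · exact differentiableAt_gMinus hr q

theorem differentiableAt_PsiMap {r : ℝ} (hr : r ≠ 0) (q : ℝ) :
    DifferentiableAt ℝ (PsiMap n k) (w, r, q) := by
  rw [PsiMap_eq]
  exact differentiableAt_ofReal_mul_apply fun i => differentiableAt_psiScale k i hr q

theorem fderiv_PsiMap_apply {r : ℝ} (hr : r ≠ 0) (q : ℝ) (u : Fin n → ℂ) (ρ σ : ℝ) (i : Fin n) :
    fderiv ℝ (PsiMap n k) (w, r, q) (u, ρ, σ) i = (psiScale k i (r, q) : ℂ) * u i
      + w i * (fderiv ℝ (psiScale k i) (r, q) (ρ, σ) : ℂ) := by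
  rw [PsiMap_eq]
  exact fderiv_ofReal_mul_apply (fun i => differentiableAt_psiScale k i hr q) u (ρ, σ) i

theorem angularPos_PsiMap_fderiv {r : ℝ} (hr : r ≠ 0) (q : ℝ) (u : Fin n → ℂ) (ρ σ : ℝ) :
    angularPos n k (PsiMap n k (w, r, q)) (fderiv ℝ (PsiMap n k) (w, r, q) (u, ρ, σ))
      = gPlus r q ^ 2 * angularPos n k w u := by
  unfold angularPos
  rw [Finset.mul_sum]
  refine Finset.sum_congr rfl fun i hi => ?_
  have hscale : psiScale k i (r, q) = gPlus r q := if_pos (Finset.mem_filter.1 hi).2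
  rw [fderiv_PsiMap_apply k w hr q, PsiMap_eq, ← hscale]
  exact re_mul_im_sub_im_mul_re_ofReal_mul _ _ _ _

theorem angularNeg_PsiMap_fderiv {r : ℝ} (hr : r ≠ 0) (q : ℝ) (u : Fin n → ℂ) (ρ σ : ℝ) :
    angularNeg n k (PsiMap n k (w, r, q)) (fderiv ℝ (PsiMap n k) (w, r, q) (u, ρ, σ))
      = gMinus r q ^ 2 * angularNeg n k w u := by
  unfold angularNeg
  rw [Finset.mul_sum]
  refine Finset.sum_congr rfl fun i hi => ?_
  have hscale : psiScale k i (r, q) = gMinus r q :=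
    if_neg (Finset.mem_filter.1 hi).2.not_gt
  rw [fderiv_PsiMap_apply k w hr q, PsiMap_eq, ← hscale]
  exact re_mul_im_sub_im_mul_re_ofReal_mul _ _ _ _

end PsiMap

theorem bispherical_pullback_theta_general
    (n : ℕ) (k : Fin n → ℤ)
    (w : Fin n → ℂ) (r q : ℝ) (hr : 0 < r) :
    DifferentiableAt ℝ (PsiMap n k) (w, r, q) ∧
    ∀ (u : Fin n → ℂ) (ρ σ : ℝ),
      thetaForm n k (PsiMap n k (w, r, q))
          (fderiv ℝ (PsiMap n k) (w, r, q) (u, ρ, σ))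
        = Real.sqrt (r ^ 4 + q ^ 2) * thetaForm n k w u + q * thetaBarForm n k w u ∧
      thetaBarForm n k (PsiMap n k (w, r, q))
          (fderiv ℝ (PsiMap n k) (w, r, q) (u, ρ, σ))
        = Real.sqrt (r ^ 4 + q ^ 2) * thetaBarForm n k w u + q * thetaForm n k w u := by
  refine ⟨differentiableAt_PsiMap k w hr.ne' q, fun u ρ σ => ?_⟩
  simp only [thetaForm, thetaBarForm, angularPos_PsiMap_fderiv k w hr.ne',
    angularNeg_PsiMap_fderiv k w hr.ne', gPlus_sq, gMinus_sq]
  constructor <;> ring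

/-- pointwise form of the pullback identities
`Ψ*θ = √(r⁴+q²)·Ξ + q·Ξ̄` and `Ψ*θ̄ = √(r⁴+q²)·Ξ̄ + q·Ξ`. -/
theorem bispherical_pullback_theta
    (n : ℕ) (hn : 1 ≤ n) (k : Fin n → ℤ) (hk : ∀ i, k i ≠ 0)
    (hP : ∃ i, 0 < k i) (hN : ∃ i, k i < 0)
    (w : Fin n → ℂ) (r q : ℝ) (hr : 0 < r) :
    DifferentiableAt ℝ (PsiMap n k) (w, r, q) ∧
    ∀ (u : Fin n → ℂ) (ρ σ : ℝ),
      thetaForm n k (PsiMap n k (w, r, q))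
          (fderiv ℝ (PsiMap n k) (w, r, q) (u, ρ, σ))
        = Real.sqrt (r ^ 4 + q ^ 2) * thetaForm n k w u + q * thetaBarForm n k w u ∧
      thetaBarForm n k (PsiMap n k (w, r, q))
          (fderiv ℝ (PsiMap n k) (w, r, q) (u, ρ, σ))
        = Real.sqrt (r ^ 4 + q ^ 2) * thetaBarForm n k w u + q * thetaForm n k w u :=
  bispherical_pullback_theta_general n k w r q hr
end

section
/- For t ∈ ℝ and w ∈ ℂⁿ let g_t·w := (e^{2πi k(i) t} w_i)_i denote the weighted circle action, and let ξ(w) := (2πi·k(i)·w_i)_i be the velocity at t = 0 of the curve t ↦ g_t·w. Then: (i) for all t ∈ ℝ and w, v ∈ ℂⁿ, θ_{g_t·w}(g_t·v) = θ_w(v) and θ̄_{g_t·w}(g_t·v) = θ̄_w(v); (ii) for all w ∈ ℂⁿ, θ_w(ξ(w)) = π·(‖w‖₊² + ‖w‖₋²) and θ̄_w(ξ(w)) = π·(‖w‖₊² − ‖w‖₋²). In particular, on the bi-ellipsoid 𝕊 one has θ(ξ) ≡ 2π and θ̄(ξ) ≡ 0; that is, up to normalization, the restriction Ξ of θ to 𝕊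 is a connection form for the weighted circle action, while the restriction Ξ̄ of θ̄ to 𝕊 is invariant and horizontal (basic). -/
/-!
Each summand of `α±` is the symplectic pairing `Im (conj w_i · v_i)`. Multiplying both entries
by the same unit complex number `e^{2πi k(i) t}` leaves it unchanged, which gives invariance. On
`ξ(w)_i = 2π k(i) i w_i` it equals `2π k(i) |w_i|²`, so `α⁺_w(ξ) = 2π ‖w‖₊²` and, since `k < 0`
on `N`, `α⁻_w(ξ) = -2π ‖w‖₋²`.
-/

open Finset

/-- `‖w‖₊² := Σ_{i : k i > 0} k(i)·|w_i|²`. -/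
noncomputable def normPlusSq (n : ℕ) (k : Fin n → ℤ) (w : Fin n → ℂ) : ℝ :=
  ∑ i ∈ univ.filter (fun i => 0 < k i), (k i : ℝ) * ‖w i‖ ^ 2

/-- `‖w‖₋² := Σ_{i : k i < 0} (−k(i))·|w_i|²`. -/
noncomputable def normMinusSq (n : ℕ) (k : Fin n → ℤ) (w : Fin n → ℂ) : ℝ :=
  ∑ i ∈ univ.filter (fun i => k i < 0), (-(k i) : ℝ) * ‖w i‖ ^ 2

/-- The weighted circle action `g_t·w := (e^{2πi k(i) t} w_i)_i`. -/
noncomputable def circleAct (n : ℕ) (k : Fin n → ℤ) (t : ℝ) (w : Fin n → ℂ) : Fin n → ℂ :=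
  fun i => Complex.exp ((2 * Real.pi * (k i : ℝ) * t : ℝ) * Complex.I) * w i

/-- The generating vector field `ξ(w)_i := 2π·k(i)·i·w_i`. -/
noncomputable def xiVec (n : ℕ) (k : Fin n → ℤ) (w : Fin n → ℂ) : Fin n → ℂ :=
  fun i => (2 * Real.pi * (k i : ℝ) : ℂ) * Complex.I * w i

namespace Complex

lemma mul_re_mul_im_sub_mul_im_mul_re (u a b : ℂ) :
    (u * a).re * (u * b).im - (u * a).im * (u * b).re = ‖u‖ ^ 2 * (a.re * b.im - a.im * b.re) := by
  rw [Complex.sq_norm, normSq_apply]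
  simp only [mul_re, mul_im]
  ring

lemma exp_mul_I_mul_re_mul_im_sub (x : ℝ) (a b : ℂ) :
    (exp (x * I) * a).re * (exp (x * I) * b).im - (exp (x * I) * a).im * (exp (x * I) * b).re
      = a.re * b.im - a.im * b.re := by
  rw [mul_re_mul_im_sub_mul_im_mul_re, norm_exp_ofReal_mul_I, one_pow, one_mul]

lemma re_mul_ofReal_mul_I_im_sub (c : ℝ) (a : ℂ) :
    a.re * (c * I * a).im - a.im * (c * I * a).re = c * ‖a‖ ^ 2 := by
  rw [Complex.sq_norm, normSq_apply]
  simp only [mul_re, mul_im, I_re, I_im, ofReal_re, ofReal_im]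
  ring

end Complex

section

variable (n : ℕ) (k : Fin n → ℤ)

lemma angularPos_circleAct (t : ℝ) (w v : Fin n → ℂ) :
    angularPos n k (circleAct n k t w) (circleAct n k t v) = angularPos n k w v :=
  sum_congr rfl fun _ _ => Complex.exp_mul_I_mul_re_mul_im_sub _ _ _

lemma angularNeg_circleAct (t : ℝ) (w v : Fin n → ℂ) :
    angularNeg n k (circleAct n k t w) (circleAct n k t v) = angularNeg n k w v :=
  sum_congr rfl fun _ _ => Complex.exp_mul_I_mul_re_mul_im_sub _ _ _

lemma re_mul_xiVec_im_sub (w : Fin n → ℂ) (i : Fin n) :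
    (w i).re * (xiVec n k w i).im - (w i).im * (xiVec n k w i).re
      = 2 * Real.pi * k i * ‖w i‖ ^ 2 := by
  have h := Complex.re_mul_ofReal_mul_I_im_sub (2 * Real.pi * k i) (w i)
  push_cast at h
  exact h

lemma angularPos_xiVec (w : Fin n → ℂ) :
    angularPos n k w (xiVec n k w) = 2 * Real.pi * normPlusSq n k w := by
  simp only [angularPos, normPlusSq, re_mul_xiVec_im_sub, mul_sum, mul_assoc]

lemma angularNeg_xiVec (w : Fin n → ℂ) :
    angularNeg n k w (xiVec n k w) = -(2 * Real.pi * normMinusSq n k w) := by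
  simp only [angularNeg, normMinusSq, re_mul_xiVec_im_sub, mul_sum, ← sum_neg_distrib]
  exact sum_congr rfl fun _ _ => by ring

end

theorem theta_invariance_and_connection_general
    (n : ℕ) (k : Fin n → ℤ) :
    (∀ (t : ℝ) (w v : Fin n → ℂ),
      thetaForm n k (circleAct n k t w) (circleAct n k t v) = thetaForm n k w v ∧
      thetaBarForm n k (circleAct n k t w) (circleAct n k t v) = thetaBarForm n k w v) ∧
    (∀ w : Fin n → ℂ,
      thetaForm n k w (xiVec n k w)
        = Real.pi * (normPlusSq n k w + normMinusSq n k w) ∧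
      thetaBarForm n k w (xiVec n k w)
        = Real.pi * (normPlusSq n k w - normMinusSq n k w)) ∧
    (∀ w : Fin n → ℂ, Real.sqrt (normPlusSq n k w) = 1 → Real.sqrt (normMinusSq n k w) = 1 →
      thetaForm n k w (xiVec n k w) = 2 * Real.pi ∧
      thetaBarForm n k w (xiVec n k w) = 0) := by
  have on_xi (w : Fin n → ℂ) :
      thetaForm n k w (xiVec n k w) = Real.pi * (normPlusSq n k w + normMinusSq n k w) ∧
      thetaBarForm n k w (xiVec n k w) = Real.pi * (normPlusSq n k w - normMinusSq n k w) := by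
    simp only [thetaForm, thetaBarForm, angularPos_xiVec, angularNeg_xiVec]
    constructor <;> ring
  refine ⟨fun t w v => ?_, on_xi, fun w hplus hminus => ?_⟩
  · simp only [thetaForm, thetaBarForm, angularPos_circleAct, angularNeg_circleAct, and_self]
  · rw [Real.sqrt_eq_one] at hplus hminus
    rw [(on_xi w).1, (on_xi w).2, hplus, hminus]
    constructor <;> ring

/-- invariance of `θ`, `θ̄` under the weighted circle action and their
values on the generating vector field `ξ`; in particular `θ(ξ) ≡ 2π` and
`θ̄(ξ) ≡ 0` on the bi-ellipsoid `𝕊`. -/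
theorem theta_invariance_and_connection
    (n : ℕ) (hn : 1 ≤ n) (k : Fin n → ℤ) (hk : ∀ i, k i ≠ 0)
    (hP : ∃ i, 0 < k i) (hN : ∃ i, k i < 0) :
    (∀ (t : ℝ) (w v : Fin n → ℂ),
      thetaForm n k (circleAct n k t w) (circleAct n k t v) = thetaForm n k w v ∧
      thetaBarForm n k (circleAct n k t w) (circleAct n k t v) = thetaBarForm n k w v) ∧
    (∀ w : Fin n → ℂ,
      thetaForm n k w (xiVec n k w)
        = Real.pi * (normPlusSq n k w + normMinusSq n k w) ∧
      thetaBarForm n k w (xiVec n k w)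
        = Real.pi * (normPlusSq n k w - normMinusSq n k w)) ∧
    (∀ w : Fin n → ℂ, Real.sqrt (normPlusSq n k w) = 1 → Real.sqrt (normMinusSq n k w) = 1 →
      thetaForm n k w (xiVec n k w) = 2 * Real.pi ∧
      thetaBarForm n k w (xiVec n k w) = 0) :=
  theta_invariance_and_connection_general n k
end

section
/- Fix a sign ∈ {+,−}. For every Schwartz function ψ : ℝ → ℂ and every k ∈ ℕ: the limit L_±^{(k+1)}(ψ) exists, and for every N ∈ ℕ there exists C > 0 such that for all integers m ≥ 1, | ∫₀^∞ σ^k · τ(±σ/(2πm)) · ( ∫_ℝ e^{±iσx} ψ(x) dx ) dσ − (±i)^{k+1} · k! · L_±^{(k+1)}(ψ) | ≤ C·m^{−N}. (The outer integral converges absolutely, since σ ↦ ∫_ℝ e^{±iσx}ψ(x)dx is rapidly decreasing and τ has compact support.) -/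
open Real Filter Topology MeasureTheory

section AuxTHFA

open Set FourierTransform

private lemma aux_int_real (k : ℕ) {r : ℝ} (hr : 0 < r) :
    IntegrableOn (fun t : ℝ => t ^ k * Real.exp (-(r * t))) (Ioi 0) := by
  apply integrable_of_isBigO_exp_neg (half_pos hr)
    (by fun_prop)
  have h : Tendsto (fun t : ℝ => t ^ k * Real.exp (-(r/2) * t)) atTop (𝓝 0) := by
    have := tendsto_rpow_mul_exp_neg_mul_atTop_nhds_zero (k:ℝ) (r/2) (half_pos hr)
    simpa [Real.rpow_natCast, neg_mul] using this
  have hb : ∀ᶠ t : ℝ in atTop, ‖t ^ k * Real.exp (-(r * t))‖ ≤ 1 * ‖Real.exp (-(r/2) * t)‖ := by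
    filter_upwards [h.eventually (eventually_le_nhds (by norm_num : (0:ℝ) < 1)),
      eventually_ge_atTop (0:ℝ)] with t ht ht0
    have : t ^ k * Real.exp (-(r * t)) = (t ^ k * Real.exp (-(r/2) * t)) * Real.exp (-(r/2) * t) := by
      rw [mul_assoc, ← Real.exp_add]; ring_nf
    rw [this, one_mul, norm_mul]
    have h2 : ‖t ^ k * Real.exp (-(r/2) * t)‖ ≤ 1 := by
      rwa [Real.norm_of_nonneg (by positivity)]
    calc ‖t ^ k * Real.exp (-(r/2)*t)‖ * ‖Real.exp (-(r/2)*t)‖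
        ≤ 1 * ‖Real.exp (-(r/2)*t)‖ := by
          exact mul_le_mul_of_nonneg_right h2 (norm_nonneg _)
      _ = ‖Real.exp (-(r/2)*t)‖ := one_mul _
  exact Asymptotics.IsBigO.of_bound 1 hb

private lemma aux_int_cplx (k : ℕ) {b : ℂ} (hb : 0 < b.re) :
    IntegrableOn (fun t : ℝ => (t : ℂ) ^ k * Complex.exp (-(b * t))) (Ioi 0) := by
  refine (aux_int_real k hb).mono' (Continuous.aestronglyMeasurable (by continuity)).restrict ?_
  filter_upwards [ae_restrict_mem measurableSet_Ioi] with t ht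
  rw [norm_mul, Complex.norm_exp]
  simp only [norm_pow, Complex.neg_re, Complex.mul_re, Complex.ofReal_re,
    Complex.ofReal_im, mul_zero, sub_zero]
  have h1 : ‖(t:ℂ)‖ = t := by
    rw [Complex.norm_real, Real.norm_of_nonneg ht.out.le]
  rw [h1]

private lemma aux_exp_deriv {b : ℂ} (z : ℝ) :
    HasDerivAt (fun t : ℝ => Complex.exp (-(b * t))) (-b * Complex.exp (-(b * z))) z := by
  have inner : HasDerivAt (fun w : ℂ => -(b * w)) (-b) (z : ℂ) := by
    have h0 := ((hasDerivAt_id (z : ℂ)).const_mul b).neg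
    rw [mul_one] at h0
    exact h0
  have e : HasDerivAt (fun w : ℂ => Complex.exp (-(b * w)))
      (Complex.exp (-(b * z)) * -b) (z : ℂ) :=
    (Complex.hasDerivAt_exp (-(b * (z : ℂ)))).comp (z : ℂ) inner
  have := e.comp_ofReal
  simpa [mul_comm] using this

lemma aux_exp_tendsto {b : ℂ} (hb : 0 < b.re) (k : ℕ) :
    Tendsto (fun t : ℝ => (t : ℂ) ^ k * Complex.exp (-(b * t))) atTop (𝓝 0) := by
  rw [tendsto_zero_iff_norm_tendsto_zero]
  have key : ∀ᶠ t : ℝ in atTop, ‖(t : ℂ) ^ k * Complex.exp (-(b * t))‖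
      = t ^ k * Real.exp (-(b.re * t)) := by
    filter_upwards [eventually_ge_atTop (0:ℝ)] with t ht
    rw [norm_mul, Complex.norm_exp]
    simp only [norm_pow, Complex.neg_re, Complex.mul_re, Complex.ofReal_re,
      Complex.ofReal_im, mul_zero, sub_zero]
    rw [Complex.norm_real, Real.norm_of_nonneg ht]
  rw [tendsto_congr' key]
  have := tendsto_rpow_mul_exp_neg_mul_atTop_nhds_zero (k : ℝ) b.re hb
  simpa [Real.rpow_natCast, neg_mul] using this

lemma aux_kernel {b : ℂ} (hb : 0 < b.re) (k : ℕ) :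
    ∫ t in Ioi (0:ℝ), (t : ℂ) ^ k * Complex.exp (-(b * t))
      = (Nat.factorial k : ℂ) / b ^ (k + 1) := by
  have hb0 : b ≠ 0 := fun h => by simp [h] at hb
  induction k with
  | zero =>
    have hderiv : ∀ x ∈ Ici (0:ℝ),
        HasDerivAt (fun t : ℝ => -Complex.exp (-(b * t)) / b) ((x:ℂ)^0 * Complex.exp (-(b * x))) x := by
      intro x _
      have := ((aux_exp_deriv (b := b) x).neg).div_const b
      convert this using 1
      · rfl
      · rfl
      · rw [pow_zero, one_mul, neg_mul, neg_neg, mul_div_cancel_left₀ _ hb0]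
    have hint : IntegrableOn (fun t : ℝ => (t:ℂ)^0 * Complex.exp (-(b * t))) (Ioi 0) :=
      aux_int_cplx 0 hb
    have htend : Tendsto (fun t : ℝ => -Complex.exp (-(b * t)) / b) atTop (𝓝 0) := by
      have := (aux_exp_tendsto hb 0).neg.div_const b
      simpa using this
    have := integral_Ioi_of_hasDerivAt_of_tendsto' hderiv hint htend
    rw [this]
    simp only [Complex.ofReal_zero, mul_zero, neg_zero, Complex.exp_zero, zero_sub, neg_neg,
      neg_div, Nat.factorial_zero, Nat.cast_one, pow_one, one_div, neg_neg]
    field_simp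
    ring
  | succ k ih =>
    set F : ℝ → ℂ := fun t => (t:ℂ)^(k+1) * Complex.exp (-(b * t)) with hF
    have hderiv : ∀ x ∈ Ici (0:ℝ), HasDerivAt F
        (((k:ℂ)+1) * ((x:ℂ)^k * Complex.exp (-(b * x))) - b * ((x:ℂ)^(k+1) * Complex.exp (-(b * x)))) x := by
      intro x _
      have hp : HasDerivAt (fun t : ℝ => (t:ℂ)^(k+1)) (((k:ℂ)+1) * (x:ℂ)^k) x := by
        have := (hasDerivAt_pow (k+1) ((x:ℝ):ℂ)).comp_ofReal
        simpa [Nat.cast_add] using this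
      have := hp.mul (aux_exp_deriv (b := b) x)
      convert this using 1
      · rfl
      · rfl
      · ring
    have hint : IntegrableOn (fun x : ℝ =>
        ((k:ℂ)+1) * ((x:ℂ)^k * Complex.exp (-(b * x))) - b * ((x:ℂ)^(k+1) * Complex.exp (-(b * x)))) (Ioi 0) :=
      ((aux_int_cplx k hb).const_mul _).sub ((aux_int_cplx (k+1) hb).const_mul _)
    have htend : Tendsto F atTop (𝓝 0) := aux_exp_tendsto hb (k+1)
    have hFTC := integral_Ioi_of_hasDerivAt_of_tendsto' hderiv hint htend
    have hsplit : ∫ x in Ioi (0:ℝ),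
        (((k:ℂ)+1) * ((x:ℂ)^k * Complex.exp (-(b * x))) - b * ((x:ℂ)^(k+1) * Complex.exp (-(b * x))))
        = ((k:ℂ)+1) * (∫ x in Ioi (0:ℝ), (x:ℂ)^k * Complex.exp (-(b * x)))
          - b * ∫ x in Ioi (0:ℝ), (x:ℂ)^(k+1) * Complex.exp (-(b * x)) := by
      rw [integral_sub ((aux_int_cplx k hb).const_mul _) ((aux_int_cplx (k+1) hb).const_mul _),
        integral_const_mul, integral_const_mul]
    have hF0 : F 0 = 0 := by simp [hF]
    rw [hsplit, hF0, sub_zero, ih] at hFTC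
    have : b * ∫ x in Ioi (0:ℝ), (x:ℂ)^(k+1) * Complex.exp (-(b * x))
        = ((k:ℂ)+1) * ((Nat.factorial k : ℂ) / b ^ (k+1)) := by linear_combination -hFTC
    field_simp at this ⊢
    rw [Nat.factorial_succ]
    push_cast
    linear_combination (this : _)

private lemma aux_g_eq (s : ℝ) (ψ : SchwartzMap ℝ ℂ) (σ : ℝ) :
    (∫ x : ℝ, Complex.exp (((s * σ * x : ℝ) : ℂ) * Complex.I) * ψ x)
      = (SchwartzMap.fourierTransformCLM ℝ ψ) (-s / (2 * π) * σ) := by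
  rw [SchwartzMap.fourierTransformCLM_apply, SchwartzMap.fourier_coe,
    Real.fourier_real_eq_integral_exp_smul]
  congr 1
  funext v
  rw [smul_eq_mul]
  congr 2
  have hπ : (π : ℝ) ≠ 0 := Real.pi_ne_zero
  have h : (-2 * π * v * (-s / (2 * π) * σ) : ℝ) = s * σ * v := by
    field_simp
  rw [h]

private lemma aux_pow_int (F : SchwartzMap ℝ ℂ) (k : ℕ) {c : ℝ} (hc : c ≠ 0) :
    Integrable (fun σ : ℝ => (σ : ℂ) ^ k * F (c * σ)) := by
  have h0 : Integrable (fun ξ : ℝ => (ξ : ℂ) ^ k * F ξ) := by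
    refine (F.integrable_pow_mul volume k).mono'
      ((Continuous.aestronglyMeasurable (by continuity))) ?_
    filter_upwards with ξ
    rw [norm_mul, norm_pow, Complex.norm_real]
  have h1 := h0.comp_mul_left' hc
  have h2 := h1.const_mul (((c : ℂ) ^ k)⁻¹)
  refine h2.congr ?_
  filter_upwards with σ
  have hck : ((c : ℂ) ^ k) ≠ 0 := pow_ne_zero _ (by exact_mod_cast hc)
  push_cast
  field_simp
  ring

lemma aux_decay (F : SchwartzMap ℝ ℂ) (M : ℕ) {c : ℝ} (hc : c ≠ 0) :
    ∃ D : ℝ, 0 ≤ D ∧ ∀ σ : ℝ, |σ| ^ M * ‖F (c * σ)‖ ≤ D := by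
  refine ⟨(|c| ^ M)⁻¹ * (SchwartzMap.seminorm ℝ M 0) F, by positivity, fun σ => ?_⟩
  have h := SchwartzMap.norm_pow_mul_le_seminorm ℝ F M (c * σ)
  have hcM : (0:ℝ) < |c| ^ M := by positivity
  have h2 : ‖c * σ‖ ^ M = |c| ^ M * |σ| ^ M := by
    rw [Real.norm_eq_abs, abs_mul, mul_pow]
  rw [h2] at h
  rw [inv_mul_eq_div, le_div_iff₀ hcM]
  calc |σ| ^ M * ‖F (c * σ)‖ * |c| ^ M = |c| ^ M * |σ| ^ M * ‖F (c * σ)‖ := by ring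
    _ ≤ _ := h

private lemma aux_fubini (s : ℝ) (hs : s = 1 ∨ s = -1) (ψ : SchwartzMap ℝ ℂ) (k : ℕ)
    {ε : ℝ} (hε : 0 < ε) :
    ∫ x : ℝ, ψ x * ((x : ℂ) + ((s * ε : ℝ) : ℂ) * Complex.I)⁻¹ ^ (k + 1)
      = ((-s : ℂ) * Complex.I) ^ (k + 1) / (Nat.factorial k : ℂ)
        * ∫ σ in Ioi (0:ℝ), ((Real.exp (-(ε * σ)) : ℝ) : ℂ) *
            ((σ : ℂ) ^ k * (∫ x : ℝ, Complex.exp (((s * σ * x : ℝ) : ℂ) * Complex.I) * ψ x)) := by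
  have hsC : (s : ℂ) * (s : ℂ) = 1 := by
    rcases hs with h | h <;> rw [h] <;> norm_num
  set b : ℝ → ℂ := fun x => (ε : ℂ) - ((s * x : ℝ) : ℂ) * Complex.I with hbdef
  have hbre : ∀ x : ℝ, 0 < (b x).re := by
    intro x; simp [hbdef, Complex.sub_re, Complex.mul_re, Complex.I_re, Complex.I_im, hε]
  have hbne : ∀ x : ℝ, b x ≠ 0 := fun x h => by simpa [h] using hbre x
  have hkfac : ((Nat.factorial k : ℂ)) ≠ 0 := by exact_mod_cast (Nat.factorial_pos k).ne'
  -- pointwise kernel identity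
  have hpoint : ∀ x : ℝ, ((x : ℂ) + ((s * ε : ℝ) : ℂ) * Complex.I)⁻¹ ^ (k + 1)
      = ((-s : ℂ) * Complex.I) ^ (k + 1) / (Nat.factorial k : ℂ)
        * ∫ σ in Ioi (0:ℝ), (σ : ℂ) ^ k * Complex.exp (-(b x * σ)) := by
    intro x
    rw [aux_kernel (hbre x) k]
    have hmul : ((x : ℂ) + ((s * ε : ℝ) : ℂ) * Complex.I) * ((-s : ℂ) * Complex.I) = b x := by
      simp only [hbdef]
      push_cast
      linear_combination (-(ε : ℂ) * Complex.I * Complex.I) * hsC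
        + (-(ε : ℂ)) * Complex.I_mul_I
    have hinv : ((x : ℂ) + ((s * ε : ℝ) : ℂ) * Complex.I)⁻¹ = ((-s : ℂ) * Complex.I) / b x := by
      have hsI : ((-s : ℂ) * Complex.I) ≠ 0 := by
        intro h
        rcases mul_eq_zero.mp h with h | h
        · rcases hs with h' | h' <;> rw [h'] at h <;> norm_num at h
        · exact Complex.I_ne_zero h
      have hne : ((x : ℂ) + ((s * ε : ℝ) : ℂ) * Complex.I) ≠ 0 := by
        intro h; rw [h, zero_mul] at hmul; exact hbne x hmul.symm
      rw [eq_div_iff (hbne x), ← hmul, ← mul_assoc, inv_mul_cancel₀ hne, one_mul]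
    rw [hinv, div_pow]
    have hb1 : b x ^ (k + 1) ≠ 0 := pow_ne_zero _ (hbne x)
    field_simp
  -- rewrite LHS using pointwise identity and pull out the constant
  calc ∫ x : ℝ, ψ x * ((x : ℂ) + ((s * ε : ℝ) : ℂ) * Complex.I)⁻¹ ^ (k + 1)
      = ∫ x : ℝ, ((-s : ℂ) * Complex.I) ^ (k + 1) / (Nat.factorial k : ℂ)
          * (ψ x * ∫ σ in Ioi (0:ℝ), (σ : ℂ) ^ k * Complex.exp (-(b x * σ))) := by
        congr 1; funext x; rw [hpoint x]; ring
    _ = ((-s : ℂ) * Complex.I) ^ (k + 1) / (Nat.factorial k : ℂ)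
          * ∫ x : ℝ, (ψ x * ∫ σ in Ioi (0:ℝ), (σ : ℂ) ^ k * Complex.exp (-(b x * σ))) := by
        rw [integral_const_mul]
    _ = ((-s : ℂ) * Complex.I) ^ (k + 1) / (Nat.factorial k : ℂ)
          * ∫ σ in Ioi (0:ℝ), ((Real.exp (-(ε * σ)) : ℝ) : ℂ) *
            ((σ : ℂ) ^ k * (∫ x : ℝ, Complex.exp (((s * σ * x : ℝ) : ℂ) * Complex.I) * ψ x)) := by
        congr 1
        -- Fubini
        have hcont : Continuous (fun z : ℝ × ℝ =>
            ψ z.1 * ((z.2 : ℂ) ^ k * Complex.exp (-(b z.1 * z.2)))) := by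
          apply (ψ.continuous.comp continuous_fst).mul
          apply Continuous.mul
          · exact (Complex.continuous_ofReal.comp continuous_snd).pow k
          · apply Complex.continuous_exp.comp
            apply Continuous.neg
            apply Continuous.mul
            · simp only [hbdef]
              fun_prop
            · exact Complex.continuous_ofReal.comp continuous_snd
        have hintg : Integrable (Function.uncurry fun (x : ℝ) (σ : ℝ) =>
            ψ x * ((σ : ℂ) ^ k * Complex.exp (-(b x * σ))))
            (volume.prod (volume.restrict (Ioi (0:ℝ)))) := by
          have hg2 : Integrable (fun t : ℝ => |t| ^ k * Real.exp (-(ε * t)))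
              (volume.restrict (Ioi (0:ℝ))) := by
            refine (aux_int_real k hε).congr_fun ?_ measurableSet_Ioi
            intro t ht
            simp [abs_of_pos (mem_Ioi.mp ht)]
          have hbound : Integrable (fun z : ℝ × ℝ => ‖ψ z.1‖ * (|z.2| ^ k * Real.exp (-(ε * z.2))))
              (volume.prod (volume.restrict (Ioi (0:ℝ)))) :=
            Integrable.mul_prod (ψ.integrable.norm) hg2
          refine hbound.mono' hcont.aestronglyMeasurable ?_
          filter_upwards with z
          simp only [Function.uncurry]
          apply le_of_eq
          simp only [norm_mul, norm_pow, Complex.norm_real, Real.norm_eq_abs,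
            Complex.norm_exp]
          have hre : (-(b z.1 * (z.2 : ℂ))).re = -(ε * z.2) := by
            simp only [hbdef, Complex.neg_re, Complex.sub_re, Complex.mul_re, Complex.I_re,
              Complex.I_im, Complex.ofReal_re, Complex.ofReal_im]
            ring
          rw [hre]
        simp_rw [← MeasureTheory.integral_const_mul]
        rw [MeasureTheory.integral_integral_swap hintg]
        refine setIntegral_congr_fun measurableSet_Ioi (fun σ hσ => ?_)
        beta_reduce
        congr 1
        funext x
        have hexp : Complex.exp (-(b x * σ)) =
            Complex.exp (((s * σ * x : ℝ) : ℂ) * Complex.I) * ((Real.exp (-(ε * σ)) : ℝ) : ℂ) := by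
          rw [Complex.ofReal_exp, ← Complex.exp_add]
          congr 1
          simp only [hbdef]
          push_cast
          ring
        rw [hexp]
        ring

end AuxTHFA

open Set in
/-- for a Schwartz function `ψ`, a sign `s ∈ {+1,−1}` and `k ∈ ℕ`, the
principal-value limit `L_±^{(k+1)}(ψ) = lim_{ε→0⁺} ∫ ψ(x)(x ± iε)^{−(k+1)} dx` exists,
and the truncated oscillatory integral
`∫₀^∞ σ^k τ(±σ/(2πm)) (∫ e^{±iσx} ψ(x) dx) dσ` equals
`(±i)^{k+1}·k!·L_±^{(k+1)}(ψ)` up to an error `O(m^{−∞})`. -/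
theorem truncated_heaviside_fourier_asymptotics
    (δ : ℝ) (hδ : 0 < δ) (τ : ℝ → ℝ) (hτ : ContDiff ℝ (⊤ : ℕ∞) τ)
    (hτsupp : tsupport τ ⊆ Set.Ioo (-δ) δ)
    (hτone : ∀ x ∈ Set.Icc (-(δ/2)) (δ/2), τ x = 1)
    (s : ℝ) (hs : s = 1 ∨ s = -1)
    (ψ : SchwartzMap ℝ ℂ) (k : ℕ) :
    ∃ L : ℂ,
      Tendsto (fun ε : ℝ =>
          ∫ x : ℝ, ψ x * ((x : ℂ) + ((s * ε : ℝ) : ℂ) * Complex.I)⁻¹ ^ (k + 1))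
        (𝓝[>] 0) (𝓝 L) ∧
      ∀ N : ℕ, ∃ C : ℝ, 0 < C ∧ ∀ m : ℕ, 1 ≤ m →
        ‖(∫ σ in Set.Ioi (0 : ℝ), (σ : ℂ) ^ k * ((τ (s * σ / (2 * π * m)) : ℝ) : ℂ) *
              (∫ x : ℝ, Complex.exp (((s * σ * x : ℝ) : ℂ) * Complex.I) * ψ x))
            - ((s : ℂ) * Complex.I) ^ (k + 1) * (k.factorial : ℂ) * L‖
          ≤ C / (m : ℝ) ^ N := by
  have hπ : (0:ℝ) < π := Real.pi_pos
  have hsabs : |s| = 1 := by rcases hs with h | h <;> rw [h] <;> norm_num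
  have hsC : (s : ℂ) * (s : ℂ) = 1 := by rcases hs with h | h <;> rw [h] <;> norm_num
  set c : ℝ := -s / (2 * π) with hcdef
  have hc : c ≠ 0 := by
    rw [hcdef, div_ne_zero_iff]
    constructor
    · rcases hs with h | h <;> rw [h] <;> norm_num
    · positivity
  set F := SchwartzMap.fourierTransformCLM ℝ ψ with hFdef
  have hg : ∀ σ : ℝ, (∫ x : ℝ, Complex.exp (((s * σ * x : ℝ) : ℂ) * Complex.I) * ψ x)
      = F (c * σ) := fun σ => aux_g_eq s ψ σ
  have hInt : Integrable (fun σ : ℝ => (σ : ℂ) ^ k * F (c * σ)) := aux_pow_int F k hc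
  have hkfac : ((Nat.factorial k : ℂ)) ≠ 0 := by exact_mod_cast (Nat.factorial_pos k).ne'
  set Iv : ℂ := ∫ σ in Ioi (0:ℝ), (σ : ℂ) ^ k * F (c * σ) with hIvdef
  set K : ℂ := ((-s : ℂ) * Complex.I) ^ (k + 1) / (Nat.factorial k : ℂ) with hKdef
  have hKI : ((s : ℂ) * Complex.I) ^ (k + 1) * (Nat.factorial k : ℂ) * (K * Iv) = Iv := by
    have h1 : ((s : ℂ) * Complex.I) * ((-s : ℂ) * Complex.I) = 1 := by
      linear_combination (-(Complex.I * Complex.I)) * hsC + (-1 : ℂ) * Complex.I_mul_I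
    have h2 : ((s : ℂ) * Complex.I) ^ (k + 1) * ((-s : ℂ) * Complex.I) ^ (k + 1) = 1 := by
      rw [← mul_pow, h1, one_pow]
    calc ((s : ℂ) * Complex.I) ^ (k + 1) * (Nat.factorial k : ℂ) * (K * Iv)
        = (((s : ℂ) * Complex.I) ^ (k + 1) * ((-s : ℂ) * Complex.I) ^ (k + 1))
            * (((Nat.factorial k : ℂ)) / ((Nat.factorial k : ℂ))) * Iv := by
          rw [hKdef]; ring
      _ = Iv := by rw [h2, div_self hkfac]; ring
  refine ⟨K * Iv, ?_, ?_⟩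
  · -- the limit part
    have hDCT : Tendsto (fun ε : ℝ => ∫ σ in Ioi (0:ℝ),
        ((Real.exp (-(ε * σ)) : ℝ) : ℂ) * ((σ : ℂ) ^ k * F (c * σ))) (𝓝[>] 0) (𝓝 Iv) := by
      apply tendsto_integral_filter_of_dominated_convergence
        (bound := fun σ : ℝ => ‖(σ : ℂ) ^ k * F (c * σ)‖)
      · apply Eventually.of_forall
        intro ε
        apply Continuous.aestronglyMeasurable
        fun_prop
      · filter_upwards [self_mem_nhdsWithin] with ε (hε : ε ∈ Ioi (0:ℝ))
        filter_upwards [ae_restrict_mem measurableSet_Ioi] with σ hσ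
        rw [norm_mul, Complex.norm_real, Real.norm_eq_abs, abs_of_pos (Real.exp_pos _)]
        have h1 : Real.exp (-(ε * σ)) ≤ 1 := by
          have h2 : -(ε * σ) ≤ 0 := by
            have : (0:ℝ) < ε * σ := mul_pos hε hσ
            linarith
          calc Real.exp (-(ε * σ)) ≤ Real.exp 0 := Real.exp_le_exp.mpr h2
            _ = 1 := Real.exp_zero
        exact mul_le_of_le_one_left (norm_nonneg _) h1
      · exact hInt.norm.integrableOn
      · apply Eventually.of_forall
        intro σ
        have hcont : Continuous fun ε : ℝ => ((Real.exp (-(ε * σ)) : ℝ) : ℂ) := by fun_prop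
        have h0 : Tendsto (fun ε : ℝ => ((Real.exp (-(ε * σ)) : ℝ) : ℂ)) (𝓝[>] 0) (𝓝 1) := by
          have := (hcont.tendsto 0).mono_left (nhdsWithin_le_nhds (s := Ioi (0:ℝ)))
          simpa using this
        simpa using h0.mul_const ((σ : ℂ) ^ k * F (c * σ))
    have heq : ∀ᶠ ε in 𝓝[>] (0:ℝ),
        K * (∫ σ in Ioi (0:ℝ), ((Real.exp (-(ε * σ)) : ℝ) : ℂ) * ((σ : ℂ) ^ k * F (c * σ)))
          = ∫ x : ℝ, ψ x * ((x : ℂ) + ((s * ε : ℝ) : ℂ) * Complex.I)⁻¹ ^ (k + 1) := by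
      filter_upwards [self_mem_nhdsWithin] with ε (hε : ε ∈ Ioi (0:ℝ))
      rw [aux_fubini s hs ψ k hε, hKdef]
      congr 1
      refine setIntegral_congr_fun measurableSet_Ioi (fun σ hσ => ?_)
      beta_reduce
      rw [hg σ]
    exact Tendsto.congr' heq (tendsto_const_nhds.mul hDCT)
  · -- the quantitative part
    intro N
    have hτc : Continuous τ := hτ.continuous
    have hcs : HasCompactSupport τ :=
      IsCompact.of_isClosed_subset isCompact_Icc (isClosed_tsupport τ)
        (hτsupp.trans Set.Ioo_subset_Icc_self)
    obtain ⟨B, hB⟩ := hτc.bounded_above_of_compact_support hcs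
    have hB0 : (0:ℝ) ≤ B := le_trans (norm_nonneg (τ 0)) (hB 0)
    obtain ⟨D, hD0, hD⟩ := aux_decay F (k + (N + 2)) hc
    set C0 : ℝ := (B + 1) * D * (π * δ) ^ (-((N:ℝ) + 1)) / ((N:ℝ) + 1) with hC0def
    have hC0 : 0 ≤ C0 := by
      apply div_nonneg _ (by positivity)
      apply mul_nonneg (mul_nonneg (by linarith) hD0) (Real.rpow_nonneg (by positivity) _)
    refine ⟨C0 + 1, by linarith, fun m hm => ?_⟩
    have hm1 : (1:ℝ) ≤ (m:ℝ) := by exact_mod_cast hm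
    have hmpos : (0:ℝ) < (m:ℝ) := by linarith
    set a : ℝ := π * δ * m with hadef
    have ha : 0 < a := by
      apply mul_pos (mul_pos hπ hδ) hmpos
    -- rewrite inner integral
    have hT : (∫ σ in Set.Ioi (0 : ℝ), (σ : ℂ) ^ k * ((τ (s * σ / (2 * π * m)) : ℝ) : ℂ) *
          (∫ x : ℝ, Complex.exp (((s * σ * x : ℝ) : ℂ) * Complex.I) * ψ x))
        = ∫ σ in Ioi (0:ℝ), (σ : ℂ) ^ k * ((τ (s * σ / (2 * π * m)) : ℝ) : ℂ) * F (c * σ) := by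
      refine setIntegral_congr_fun measurableSet_Ioi (fun σ hσ => ?_)
      beta_reduce
      rw [hg σ]
    rw [hT, hKI]
    have hmeas : Continuous (fun σ : ℝ =>
        (σ : ℂ) ^ k * ((τ (s * σ / (2 * π * m)) : ℝ) : ℂ) * F (c * σ)) := by
      fun_prop
    have hIntτ : IntegrableOn (fun σ : ℝ =>
        (σ : ℂ) ^ k * ((τ (s * σ / (2 * π * m)) : ℝ) : ℂ) * F (c * σ)) (Ioi 0) := by
      refine ((hInt.norm.const_mul B).integrableOn).mono'
        hmeas.aestronglyMeasurable.restrict ?_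
      filter_upwards with σ
      have heq : ‖(σ : ℂ) ^ k * ((τ (s * σ / (2 * π * m)) : ℝ) : ℂ) * F (c * σ)‖
          = |τ (s * σ / (2 * π * m))| * ‖(σ : ℂ) ^ k * F (c * σ)‖ := by
        rw [norm_mul, norm_mul, norm_mul, Complex.norm_real, Real.norm_eq_abs]
        ring
      rw [heq]
      apply mul_le_mul_of_nonneg_right _ (norm_nonneg _)
      exact le_trans (le_of_eq (Real.norm_eq_abs _).symm) (hB _)
    have hsub : (∫ σ in Ioi (0:ℝ), (σ : ℂ) ^ k * ((τ (s * σ / (2 * π * m)) : ℝ) : ℂ) * F (c * σ)) - Iv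
        = ∫ σ in Ioi (0:ℝ), (σ : ℂ) ^ k * (((τ (s * σ / (2 * π * m)) : ℝ) : ℂ) - 1) * F (c * σ) := by
      rw [hIvdef, ← integral_sub hIntτ hInt.integrableOn]
      congr 1
      funext σ
      ring
    rw [hsub]
    set h : ℝ → ℂ := fun σ =>
      (σ : ℂ) ^ k * (((τ (s * σ / (2 * π * m)) : ℝ) : ℂ) - 1) * F (c * σ) with hhdef
    have hInth : IntegrableOn h (Ioi 0) := by
      refine (hIntτ.sub hInt.integrableOn).congr (Eventually.of_forall fun σ => ?_)
      simp only [hhdef, Pi.sub_apply]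
      ring
    -- vanishing for small σ
    have hτ1 : ∀ σ : ℝ, 0 < σ → σ ≤ a → τ (s * σ / (2 * π * m)) = 1 := by
      intro σ h0 hle
      apply hτone
      have h2πm : (0:ℝ) < 2 * π * m := by positivity
      have habs : |s * σ / (2 * π * m)| = σ / (2 * π * m) := by
        rw [abs_div, abs_mul, hsabs, one_mul, abs_of_pos h0, abs_of_pos h2πm]
      have hle2 : σ / (2 * π * m) ≤ δ / 2 := by
        rw [div_le_iff₀ h2πm]
        nlinarith [hle]
      have := abs_le.mp (le_trans (le_of_eq habs) hle2)
      exact ⟨this.1, this.2⟩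
    -- restrict to Ioi a
    have hnorm_eq : ∫ σ in Ioi (0:ℝ), ‖h σ‖ = ∫ σ in Ioi a, ‖h σ‖ := by
      rw [← integral_indicator measurableSet_Ioi, ← integral_indicator measurableSet_Ioi]
      congr 1
      funext σ
      by_cases h1 : σ ∈ Ioi a
      · rw [indicator_of_mem h1, indicator_of_mem (show σ ∈ Ioi (0:ℝ) from lt_trans ha h1)]
      · rw [indicator_of_notMem h1]
        by_cases h2 : σ ∈ Ioi (0:ℝ)
        · rw [indicator_of_mem h2]
          have hz : τ (s * σ / (2 * π * m)) = 1 :=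
            hτ1 σ h2 (le_of_not_gt h1)
          simp [hhdef, hz]
        · rw [indicator_of_notMem h2]
    -- pointwise bound on Ioi a
    have hpt : ∀ σ ∈ Ioi a, ‖h σ‖ ≤ ((B + 1) * D) * σ ^ (-((N:ℝ) + 2)) := by
      intro σ hσ
      have hσpos : 0 < σ := lt_trans ha hσ
      have hτm : ‖((τ (s * σ / (2 * π * m)) : ℝ) : ℂ) - 1‖ ≤ B + 1 := by
        calc ‖((τ (s * σ / (2 * π * m)) : ℝ) : ℂ) - 1‖
            ≤ ‖((τ (s * σ / (2 * π * m)) : ℝ) : ℂ)‖ + ‖(1:ℂ)‖ := norm_sub_le _ _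
          _ ≤ B + 1 := by
              rw [norm_one, Complex.norm_real]
              exact add_le_add_left (hB _) 1
      have hFb : σ ^ k * ‖F (c * σ)‖ ≤ D * σ ^ (-((N:ℝ) + 2)) := by
        have hkey : σ ^ k * ‖F (c * σ)‖ * σ ^ (N + 2) ≤ D := by
          have := hD σ
          rw [abs_of_pos hσpos] at this
          calc σ ^ k * ‖F (c * σ)‖ * σ ^ (N + 2) = σ ^ (k + (N + 2)) * ‖F (c * σ)‖ := by
                rw [pow_add]; ring
            _ ≤ D := this
        have hpow : σ ^ (-((N:ℝ) + 2)) = (σ ^ (N + 2) : ℝ)⁻¹ := by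
          rw [show -((N:ℝ) + 2) = -((N + 2 : ℕ) : ℝ) by push_cast; ring,
            Real.rpow_neg hσpos.le, Real.rpow_natCast]
        rw [hpow, ← div_eq_mul_inv, le_div_iff₀ (by positivity)]
        exact hkey
      calc ‖h σ‖ = ‖((τ (s * σ / (2 * π * m)) : ℝ) : ℂ) - 1‖ * (σ ^ k * ‖F (c * σ)‖) := by
            simp only [hhdef]
            rw [norm_mul, norm_mul, norm_pow, Complex.norm_real, Real.norm_eq_abs,
              abs_of_pos hσpos]
            ring
        _ ≤ (B + 1) * (D * σ ^ (-((N:ℝ) + 2))) := by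
            apply mul_le_mul hτm hFb (by positivity) (by linarith)
        _ = ((B + 1) * D) * σ ^ (-((N:ℝ) + 2)) := by ring
    -- assemble
    have hrpow_int : IntegrableOn (fun σ : ℝ => ((B + 1) * D) * σ ^ (-((N:ℝ) + 2))) (Ioi a) :=
      (integrableOn_Ioi_rpow_of_lt (by linarith) ha).const_mul _
    have hchain : ‖∫ σ in Ioi (0:ℝ), h σ‖ ≤ ((B + 1) * D) * (a ^ (-((N:ℝ) + 1)) / ((N:ℝ) + 1)) := by
      calc ‖∫ σ in Ioi (0:ℝ), h σ‖ ≤ ∫ σ in Ioi (0:ℝ), ‖h σ‖ := norm_integral_le_integral_norm _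
        _ = ∫ σ in Ioi a, ‖h σ‖ := hnorm_eq
        _ ≤ ∫ σ in Ioi a, ((B + 1) * D) * σ ^ (-((N:ℝ) + 2)) := by
            apply setIntegral_mono_on
              ((hInth.mono_set (Ioi_subset_Ioi ha.le)).norm) hrpow_int measurableSet_Ioi hpt
        _ = ((B + 1) * D) * ∫ σ in Ioi a, σ ^ (-((N:ℝ) + 2)) := integral_const_mul _ _
        _ = ((B + 1) * D) * (a ^ (-((N:ℝ) + 1)) / ((N:ℝ) + 1)) := by
            rw [integral_Ioi_rpow_of_lt (by linarith) ha,
              show -((N:ℝ) + 2) + 1 = -((N:ℝ) + 1) by ring, neg_div_neg_eq]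
    refine le_trans hchain ?_
    -- final arithmetic
    have hsplit : a ^ (-((N:ℝ) + 1)) = (π * δ) ^ (-((N:ℝ) + 1)) * (m:ℝ) ^ (-((N:ℝ) + 1)) := by
      rw [hadef, Real.mul_rpow (by positivity) hmpos.le]
    have hmle : (m:ℝ) ^ (-((N:ℝ) + 1)) ≤ (m:ℝ) ^ (-(N:ℝ)) :=
      Real.rpow_le_rpow_of_exponent_le hm1 (by linarith)
    have hmN : (m:ℝ) ^ (-(N:ℝ)) = ((m:ℝ) ^ N)⁻¹ := by
      rw [Real.rpow_neg hmpos.le, Real.rpow_natCast]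
    calc ((B + 1) * D) * (a ^ (-((N:ℝ) + 1)) / ((N:ℝ) + 1))
        = ((B + 1) * D * (π * δ) ^ (-((N:ℝ) + 1)) / ((N:ℝ) + 1)) * (m:ℝ) ^ (-((N:ℝ) + 1)) := by
          rw [hsplit]; ring
      _ ≤ ((B + 1) * D * (π * δ) ^ (-((N:ℝ) + 1)) / ((N:ℝ) + 1)) * (m:ℝ) ^ (-(N:ℝ)) := by
          apply mul_le_mul_of_nonneg_left hmle hC0
      _ = C0 / (m:ℝ) ^ N := by rw [hmN, hC0def]; ring
      _ ≤ (C0 + 1) / (m:ℝ) ^ N := by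
          gcongr
          linarith
end

section
/- Fix a sign ∈ {+,−}. For every Schwartz function ψ : ℝ → ℂ and every k ∈ ℕ: the function σ ↦ σ^k · ∫_ℝ e^{±iσx} ψ(x) dx is integrable on (0,∞), the limit L_±^{(k+1)}(ψ) exists, and ∫₀^∞ σ^k · ( ∫_ℝ e^{±iσx} ψ(x) dx ) dσ = (±i)^{k+1} · k! · L_±^{(k+1)}(ψ). -/
/-!
Insert the Abel factor `e^{-εσ}`. For `ε > 0` the double integral converges absolutely, so
Fubini and `∫₀^∞ σ^k e^{-zσ} dσ = k!/z^{k+1}` (`Re z > 0`, here `z = ε ∓ i x`) turn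
`∫₀^∞ e^{-εσ} σ^k ∫ e^{±iσx} ψ(x) dx dσ` into `(±i)^{k+1} k! ∫ ψ(x) (x ± iε)^{-(k+1)} dx`.
Since `σ ↦ ∫ e^{±iσx} ψ(x) dx` is a rescaled Fourier transform of `ψ`, hence a Schwartz
function, dominated convergence lets `ε → 0⁺` on the Laplace side, which yields both the
existence of the limit and the identity.
-/

open Real Filter Topology MeasureTheory Set Complex

open scoped FourierTransform SchwartzMap

theorem integrableOn_pow_mul_cexp_neg_mul_Ioi (k : ℕ) {z : ℂ} (hz : 0 < z.re) :
    IntegrableOn (fun σ : ℝ => (σ : ℂ) ^ k * cexp (-(z * σ))) (Ioi 0) := by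
  refine (integrableOn_rpow_mul_exp_neg_mul_rpow (s := k) (p := 1)
    (by linarith [k.cast_nonneg (α := ℝ)]) zero_lt_one hz).mono' (by fun_prop) ?_
  filter_upwards [ae_restrict_mem measurableSet_Ioi] with σ (hσ : 0 < σ)
  simp [norm_exp, abs_of_pos hσ, mul_re]

theorem tendsto_pow_mul_cexp_neg_mul_atTop (k : ℕ) {z : ℂ} (hz : 0 < z.re) :
    Tendsto (fun σ : ℝ => (σ : ℂ) ^ k * cexp (-(z * σ))) atTop (𝓝 0) := by
  rw [tendsto_zero_iff_norm_tendsto_zero]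
  have h := ((tendsto_pow_mul_exp_neg_atTop_nhds_zero k).comp
    (tendsto_id.const_mul_atTop hz)).const_mul (z.re⁻¹ ^ k)
  rw [mul_zero] at h
  refine h.congr' ?_
  filter_upwards [eventually_gt_atTop 0] with σ hσ
  simp [norm_exp, abs_of_pos hσ, mul_re, mul_pow, mul_assoc, hz.ne']

theorem mul_integral_pow_succ_mul_cexp_neg_mul_Ioi (k : ℕ) {z : ℂ} (hz : 0 < z.re) :
    z * ∫ σ in Ioi (0 : ℝ), (σ : ℂ) ^ (k + 1) * cexp (-(z * σ)) =
      (k + 1) * ∫ σ in Ioi (0 : ℝ), (σ : ℂ) ^ k * cexp (-(z * σ)) := by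
  have hderiv : ∀ σ ∈ Ici (0 : ℝ),
      HasDerivAt (fun t : ℝ => (t : ℂ) ^ (k + 1) * cexp (-(z * t)))
        ((k + 1) * ((σ : ℂ) ^ k * cexp (-(z * σ))) - z * ((σ : ℂ) ^ (k + 1) * cexp (-(z * σ))))
        σ := by
    intro σ _
    have h : HasDerivAt (fun w : ℂ => w ^ (k + 1) * cexp (-(z * w)))
        ((k + 1) * ((σ : ℂ) ^ k * cexp (-(z * σ))) - z * ((σ : ℂ) ^ (k + 1) * cexp (-(z * σ))))
        σ :=
      ((hasDerivAt_pow (k + 1) (σ : ℂ)).mul ((hasDerivAt_id (σ : ℂ)).const_mul z).neg.cexp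
        ).congr_deriv (by simp; ring)
    exact h.comp_ofReal
  have hint := ((integrableOn_pow_mul_cexp_neg_mul_Ioi k hz).const_mul ((k : ℂ) + 1)).sub
    ((integrableOn_pow_mul_cexp_neg_mul_Ioi (k + 1) hz).const_mul z)
  have h := integral_Ioi_of_hasDerivAt_of_tendsto' hderiv hint
    (tendsto_pow_mul_cexp_neg_mul_atTop (k + 1) hz)
  rw [integral_sub ((integrableOn_pow_mul_cexp_neg_mul_Ioi k hz).const_mul _)
    ((integrableOn_pow_mul_cexp_neg_mul_Ioi (k + 1) hz).const_mul _), integral_const_mul,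
    integral_const_mul] at h
  simp only [ofReal_zero, ne_eq, Nat.add_one_ne_zero, not_false_eq_true, zero_pow, zero_mul,
    sub_zero] at h
  linear_combination -h

theorem integral_pow_mul_cexp_neg_mul_Ioi (k : ℕ) {z : ℂ} (hz : 0 < z.re) :
    ∫ σ in Ioi (0 : ℝ), (σ : ℂ) ^ k * cexp (-(z * σ)) = k.factorial / z ^ (k + 1) := by
  have hz0 : z ≠ 0 := fun h => by simp [h] at hz
  induction k with
  | zero =>
    simpa [neg_mul] using integral_exp_mul_complex_Ioi (a := -z) (by simpa using hz) 0
  | succ k ih =>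
    rw [← mul_right_inj' hz0, mul_integral_pow_succ_mul_cexp_neg_mul_Ioi k hz, ih,
      Nat.factorial_succ]
    field_simp
    push_cast
    ring

theorem integral_cexp_mul_I_mul_eq_fourier (f : ℝ → ℂ) (t : ℝ) :
    ∫ x, cexp (↑(t * x) * I) * f x = 𝓕 f (-t / (2 * π)) := by
  rw [Real.fourier_real_eq_integral_exp_smul]
  congr 1 with x
  rw [smul_eq_mul]
  refine congrArg (fun r : ℝ => cexp (r * I) * f x) ?_
  field_simp

theorem SchwartzMap.integrable_ofReal_pow_mul_comp_mul_left (φ : 𝓢(ℝ, ℂ)) (k : ℕ) {c : ℝ}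
    (hc : c ≠ 0) : Integrable (fun σ : ℝ => (σ : ℂ) ^ k * φ (c * σ)) := by
  have h : Integrable (fun u : ℝ => (u : ℂ) ^ k * φ u) :=
    (φ.integrable_pow_mul volume k).mono' (by fun_prop) (.of_forall fun u => by simp)
  refine ((h.comp_mul_left' hc).const_mul ((c : ℂ) ^ k)⁻¹).congr (.of_forall fun σ => ?_)
  simp [mul_pow, mul_assoc, hc]

theorem SchwartzMap.integrable_pow_mul_integral_cexp_mul_I (ψ : 𝓢(ℝ, ℂ)) (k : ℕ) {a : ℝ}
    (ha : a ≠ 0) :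
    Integrable (fun σ : ℝ => (σ : ℂ) ^ k * ∫ x, cexp (↑(a * σ * x) * I) * ψ x) := by
  simp_rw [integral_cexp_mul_I_mul_eq_fourier, ← SchwartzMap.fourier_coe]
  convert (𝓕 ψ).integrable_ofReal_pow_mul_comp_mul_left k
    (div_ne_zero (neg_ne_zero.2 ha) (by positivity : 2 * π ≠ 0)) using 4
  ring

theorem tendsto_setIntegral_exp_neg_mul_smul_nhdsGT_zero {E : Type*} [NormedAddCommGroup E]
    [NormedSpace ℝ E] {g : ℝ → E} (hg : IntegrableOn g (Ioi 0)) :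
    Tendsto (fun ε : ℝ => ∫ σ in Ioi 0, Real.exp (-(ε * σ)) • g σ) (𝓝[>] 0)
      (𝓝 (∫ σ in Ioi 0, g σ)) := by
  refine tendsto_integral_filter_of_dominated_convergence (fun σ => ‖g σ‖)
    (.of_forall fun ε => (Continuous.aestronglyMeasurable (by fun_prop)).smul
      hg.aestronglyMeasurable) ?_ hg.norm (.of_forall fun σ => ?_)
  · filter_upwards [self_mem_nhdsWithin] with ε (hε : 0 < ε)
    filter_upwards [ae_restrict_mem measurableSet_Ioi] with σ (hσ : 0 < σ)
    rw [norm_smul, Real.norm_of_nonneg (Real.exp_pos _).le]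
    exact mul_le_of_le_one_left (norm_nonneg _)
      (Real.exp_le_one_iff.2 (neg_nonpos.2 (mul_pos hε hσ).le))
  · have h : Continuous fun ε : ℝ => Real.exp (-(ε * σ)) • g σ := by fun_prop
    simpa using (h.tendsto 0).mono_left nhdsWithin_le_nhds

theorem integral_Ioi_exp_neg_mul_smul_pow_mul_integral_cexp {f : ℝ → ℂ} (hf : Integrable f)
    (k : ℕ) (a : ℝ) {ε : ℝ} (hε : 0 < ε) :
    ∫ σ in Ioi 0, Real.exp (-(ε * σ)) • ((σ : ℂ) ^ k * ∫ x, cexp (↑(a * σ * x) * I) * f x) =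
      ∫ x, k.factorial / ((ε : ℂ) - a * x * I) ^ (k + 1) * f x := by
  set F : ℝ → ℝ → ℂ := fun σ x =>
    cexp (↑(a * σ * x) * I) * ((σ : ℂ) ^ k * cexp (-(ε * σ)) * f x)
  have hF : Integrable (Function.uncurry F) ((volume.restrict (Ioi 0)).prod volume) :=
    ((integrableOn_pow_mul_cexp_neg_mul_Ioi k (by simpa using hε)).mul_prod hf).bdd_mul
      (c := 1) (by fun_prop) (.of_forall fun p => by simp [norm_exp])
  calc _ = ∫ σ in Ioi 0, ∫ x, F σ x := by
        congr 1 with σ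
        rw [← integral_const_mul, ← integral_smul]
        congr 1 with x
        simp only [F, Complex.real_smul, ofReal_exp]
        push_cast
        ring
    _ = ∫ x, ∫ σ in Ioi 0, F σ x := integral_integral_swap hF
    _ = _ := by
        congr 1 with x
        have hz : 0 < ((ε : ℂ) - a * x * I).re := by simpa using hε
        rw [← integral_pow_mul_cexp_neg_mul_Ioi k hz, ← integral_mul_const]
        congr 1 with σ
        have hexp : cexp (-(((ε : ℂ) - a * x * I) * σ)) =
            cexp (↑(a * σ * x) * I) * cexp (-(ε * σ)) := by
          rw [← Complex.exp_add]
          push_cast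
          ring_nf
        rw [hexp]
        ring

theorem inv_ofReal_sub_mul_I_of_sq_eq_one {s : ℝ} (hs : s ^ 2 = 1) (ε x : ℝ) :
    ((ε : ℂ) - s * x * I)⁻¹ = s * I * ((x : ℂ) + ↑(s * ε) * I)⁻¹ := by
  have hs' : (s : ℂ) ^ 2 = 1 := by exact_mod_cast hs
  have hfactor : (ε : ℂ) - s * x * I = -(s * I) * ((x : ℂ) + ↑(s * ε) * I) := by
    push_cast
    linear_combination (-(ε : ℂ)) * hs' + (s : ℂ) ^ 2 * ε * I_sq
  rw [hfactor, mul_inv,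
    inv_eq_of_mul_eq_one_right (b := s * I) (by linear_combination (-I ^ 2) * hs' - I_sq)]

/-- for a Schwartz function `ψ`, a sign `s ∈ {+1,−1}` and `k ∈ ℕ`, the
function `σ ↦ σ^k ∫ e^{±iσx} ψ(x) dx` is integrable on `(0,∞)`, the principal-value
limit `L_±^{(k+1)}(ψ)` exists, and
`∫₀^∞ σ^k (∫ e^{±iσx} ψ(x) dx) dσ = (±i)^{k+1}·k!·L_±^{(k+1)}(ψ)`. -/
theorem heaviside_fourier_identity
    (s : ℝ) (hs : s = 1 ∨ s = -1) (ψ : SchwartzMap ℝ ℂ) (k : ℕ) :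
    IntegrableOn
      (fun σ : ℝ => (σ : ℂ) ^ k *
        ∫ x : ℝ, Complex.exp (((s * σ * x : ℝ) : ℂ) * Complex.I) * ψ x)
      (Set.Ioi 0) ∧
    ∃ L : ℂ,
      Tendsto (fun ε : ℝ =>
          ∫ x : ℝ, ψ x * ((x : ℂ) + ((s * ε : ℝ) : ℂ) * Complex.I)⁻¹ ^ (k + 1))
        (𝓝[>] 0) (𝓝 L) ∧
      (∫ σ in Set.Ioi (0 : ℝ), (σ : ℂ) ^ k *
          ∫ x : ℝ, Complex.exp (((s * σ * x : ℝ) : ℂ) * Complex.I) * ψ x)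
        = ((s : ℂ) * Complex.I) ^ (k + 1) * (k.factorial : ℂ) * L := by
  have hs2 : s ^ 2 = 1 := by rcases hs with rfl | rfl <;> norm_num
  have hs0 : s ≠ 0 := by rintro rfl; norm_num at hs2
  have hJ := (ψ.integrable_pow_mul_integral_cexp_mul_I k hs0).integrableOn (s := Ioi 0)
  set C : ℂ := ((s : ℂ) * I) ^ (k + 1) * k.factorial
  have hC : C ≠ 0 := mul_ne_zero (pow_ne_zero _ (mul_ne_zero (ofReal_ne_zero.2 hs0) I_ne_zero))
    (Nat.cast_ne_zero.2 k.factorial_ne_zero)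
  have hAbel : ∀ ε : ℝ, 0 < ε →
      ∫ x : ℝ, ψ x * ((x : ℂ) + ((s * ε : ℝ) : ℂ) * I)⁻¹ ^ (k + 1) =
      C⁻¹ * ∫ σ in Ioi (0 : ℝ), Real.exp (-(ε * σ)) •
        ((σ : ℂ) ^ k * ∫ x : ℝ, cexp (((s * σ * x : ℝ) : ℂ) * I) * ψ x) := by
    intro ε hε
    rw [integral_Ioi_exp_neg_mul_smul_pow_mul_integral_cexp ψ.integrable k s hε,
      eq_inv_mul_iff_mul_eq₀ hC, ← integral_const_mul]
    congr 1 with x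
    rw [div_eq_mul_inv, ← inv_pow, inv_ofReal_sub_mul_I_of_sq_eq_one hs2]
    ring
  refine ⟨hJ, C⁻¹ * ∫ σ in Ioi (0 : ℝ), (σ : ℂ) ^ k *
    ∫ x : ℝ, cexp (((s * σ * x : ℝ) : ℂ) * I) * ψ x, ?_, (mul_inv_cancel_left₀ hC _).symm⟩
  exact ((tendsto_setIntegral_exp_neg_mul_smul_nhdsGT_zero hJ).const_mul C⁻¹).congr'
    (eventually_nhdsWithin_of_forall fun ε hε => (hAbel ε hε).symm)
end

section
/- Let R be a commutative ring in which 2 is invertible, let a, b ∈ R be nilpotent, and let x ∈ R be a unit. Then x − a − b and x − a + b are units, only finitely many of the summands below are nonzero, and Σ_{j ≥ 0, k ≥ 1 odd} C(j+k, j) · a^j · b^k · (x⁻¹)^{j+k+1} = ( (x − a − b)⁻¹ − (x − a + b)⁻¹ )·2⁻¹. (This is the algebraic identity underlying the simplification of the boundary contribution of an indefinite fixed point component in the Witten integral, the relevant ring being the commutative ring of even-degree differential forms, with a = dΞ_{S_F}, b = dΞ̄_{S_F} nilpotent and x a nonzero real number.) -/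
/-!
For `c` nilpotent and `y = x⁻¹`, the inverse of `x - c` is the terminating Neumann series
`∑ cⁿ yⁿ⁺¹`. Taking `c = a ± b` and expanding `(a + b)ⁿ - (a - b)ⁿ` binomially leaves twice the
terms odd in `b`; grouping the double sum over `(j, k)` by total degree `j + k = n` matches it
with the Neumann series term by term.
-/

open Finset

section NeumannSeries

variable {R : Type*} [CommRing R] {x c : R} {n : ℕ}

theorem sub_mul_sum_pow_mul_inverse_pow (hx : IsUnit x) (hc : c ^ n = 0) :
    (x - c) * ∑ i ∈ range n, c ^ i * Ring.inverse x ^ (i + 1) = 1 := by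
  set y := Ring.inverse x
  calc (x - c) * ∑ i ∈ range n, c ^ i * y ^ (i + 1)
      = (1 - c * y) * ∑ i ∈ range n, (c * y) ^ i := by
        rw [← Ring.mul_inverse_cancel x hx, mul_sum, mul_sum]
        exact sum_congr rfl fun i _ => by ring
    _ = 1 := by rw [mul_neg_geom_sum, mul_pow, hc, zero_mul, sub_zero]

theorem Ring.inverse_sub_eq_sum_of_pow_eq_zero (hx : IsUnit x) (hc : c ^ n = 0) :
    Ring.inverse (x - c) = ∑ i ∈ range n, c ^ i * Ring.inverse x ^ (i + 1) := by
  have h := sub_mul_sum_pow_mul_inverse_pow hx hc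
  simpa using (Ring.inverse_mul_eq_iff_eq_mul _ 1 _ (IsUnit.of_mul_eq_one _ h)).mpr h.symm

end NeumannSeries

theorem add_pow_sub_sub_pow {R : Type*} [CommRing R] (a b : R) (n : ℕ) :
    (a + b) ^ n - (a - b) ^ n =
      2 * ∑ p ∈ antidiagonal n, if Odd p.2 then (n.choose p.1 : R) * a ^ p.1 * b ^ p.2 else 0 := by
  rw [(Commute.all a b).add_pow', sub_eq_add_neg a b, (Commute.all a (-b)).add_pow',
    ← sum_sub_distrib, mul_sum]
  refine sum_congr rfl fun p _ => ?_
  rcases Nat.even_or_odd p.2 with h | h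
  · simp [h.neg_pow, Nat.not_odd_iff_even.mpr h]
  · simp only [h.neg_pow, h, if_true, nsmul_eq_mul]
    ring

theorem sum_antidiagonal_odd_mul_two {R : Type*} [CommRing R] (a b y : R) (n : ℕ) :
    (∑ p ∈ antidiagonal n, if Odd p.2 then
      (((p.1 + p.2).choose p.1 : ℕ) : R) * a ^ p.1 * b ^ p.2 * y ^ (p.1 + p.2 + 1) else 0) * 2 =
      ((a + b) ^ n - (a - b) ^ n) * y ^ (n + 1) := by
  rw [add_pow_sub_sub_pow, sum_mul, mul_comm 2, mul_assoc, sum_mul]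
  refine sum_congr rfl fun p hp => ?_
  obtain rfl := HasAntidiagonal.mem_antidiagonal.mp hp
  split_ifs <;> ring

section FinsumAntidiagonal

variable {M : Type*} [AddCommMonoid M] {f : ℕ × ℕ → M} {N : ℕ}

theorem support_subset_filter_add_lt (hf : ∀ p, N ≤ p.1 + p.2 → f p = 0) :
    Function.support f ⊆ ↑{p ∈ range N ×ˢ range N | p.1 + p.2 < N} := by
  intro p hp
  have : p.1 + p.2 < N := by_contra fun h => hp (hf p (not_lt.mp h))
  simp only [coe_filter, mem_product, mem_range, Set.mem_ofPred_eq]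
  omega

theorem finsum_eq_sum_range_sum_antidiagonal (hf : ∀ p, N ≤ p.1 + p.2 → f p = 0) :
    ∑ᶠ p, f p = ∑ n ∈ range N, ∑ p ∈ antidiagonal n, f p := by
  rw [finsum_eq_sum_of_support_subset f (support_subset_filter_add_lt hf),
    ← sum_fiberwise_of_maps_to (g := fun p : ℕ × ℕ => p.1 + p.2) (t := range N)
      (fun p hp => mem_range.mpr (mem_filter.mp hp).2)]
  refine sum_congr rfl fun n hn => sum_congr ?_ fun _ _ => rfl
  ext p
  simp only [mem_filter, mem_product, mem_range, HasAntidiagonal.mem_antidiagonal] at hn ⊢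
  omega

end FinsumAntidiagonal

/-- in a commutative ring in which `2` is invertible, if `a`, `b` are
nilpotent and `x` is a unit, then `x − a − b` and `x − a + b` are units, only finitely
many of the terms `C(j+k,j)·a^j·b^k·(x⁻¹)^{j+k+1}` with `k` odd are nonzero, and their
sum equals `((x − a − b)⁻¹ − (x − a + b)⁻¹)·2⁻¹`. -/
theorem binomial_odd_part_geometric_series_nilpotent
    {R : Type*} [CommRing R] (h2 : IsUnit (2 : R)) (a b x : R)
    (ha : IsNilpotent a) (hb : IsNilpotent b) (hx : IsUnit x) :
    IsUnit (x - a - b) ∧ IsUnit (x - a + b) ∧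
    (Function.support (fun p : ℕ × ℕ =>
        if Odd p.2 then
          (((p.1 + p.2).choose p.1 : ℕ) : R) * a ^ p.1 * b ^ p.2 *
            (Ring.inverse x) ^ (p.1 + p.2 + 1)
        else 0)).Finite ∧
    (∑ᶠ p : ℕ × ℕ,
        if Odd p.2 then
          (((p.1 + p.2).choose p.1 : ℕ) : R) * a ^ p.1 * b ^ p.2 *
            (Ring.inverse x) ^ (p.1 + p.2 + 1)
        else 0)
      = (Ring.inverse (x - a - b) - Ring.inverse (x - a + b)) * Ring.inverse (2 : R) := by
  obtain ⟨m, hm⟩ := (Commute.all a b).isNilpotent_add ha hb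
  obtain ⟨m', hm'⟩ := (Commute.all a b).isNilpotent_sub ha hb
  obtain ⟨na, hna⟩ := ha
  obtain ⟨nb, hnb⟩ := hb
  set N := na + nb + m + m'
  have hplus : (a + b) ^ N = 0 := pow_eq_zero_of_le (by omega) hm
  have hminus : (a - b) ^ N = 0 := pow_eq_zero_of_le (by omega) hm'
  rw [sub_sub, show x - a + b = x - (a - b) by abel]
  set y := Ring.inverse x
  set F : ℕ × ℕ → R := fun p => if Odd p.2 then
    (((p.1 + p.2).choose p.1 : ℕ) : R) * a ^ p.1 * b ^ p.2 * y ^ (p.1 + p.2 + 1) else 0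
  have hF : ∀ p : ℕ × ℕ, N ≤ p.1 + p.2 → F p = 0 := by
    intro p hp
    rcases le_or_gt na p.1 with h | h
    · simp [F, pow_eq_zero_of_le h hna]
    · simp [F, pow_eq_zero_of_le (by omega : nb ≤ p.2) hnb]
  refine ⟨IsUnit.of_mul_eq_one _ (sub_mul_sum_pow_mul_inverse_pow hx hplus),
    IsUnit.of_mul_eq_one _ (sub_mul_sum_pow_mul_inverse_pow hx hminus),
    (finite_toSet _).subset (support_subset_filter_add_lt hF), ?_⟩
  rw [finsum_eq_sum_range_sum_antidiagonal hF, Ring.inverse_sub_eq_sum_of_pow_eq_zero hx hplus,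
    Ring.inverse_sub_eq_sum_of_pow_eq_zero hx hminus, ← sum_sub_distrib, sum_mul]
  refine sum_congr rfl fun n _ => ?_
  linear_combination (∑ p ∈ antidiagonal n, F p) * (Ring.mul_inverse_cancel _ h2).symm
    + Ring.inverse 2 * sum_antidiagonal_odd_mul_two a b y n
end
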